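/- In the 4-player matched–mismatched pennies replicator system, the line segment {(1−t, t, t, 1−t) : t ∈ (0,1)} is invariant under the flow, and every solution starting on it converges to the mixed equilibrium (1/2, 1/2, 1/2, 1/2) as t → ∞. -/

import Mathlib

/-!
The map `S (a, b, c, d) = (d, 1 - a, b, 1 - c)` is a symmetry of the replicator field and its
fixed points are exactly the points `(1 - s, s, s, 1 - s)`. Since the field is polynomial, hence
locally Lipschitz, `S ∘ x` and `x` are solutions with the same initial value and therefore
coincide: the segment is invariant. On it the second coordinate solves
`ṡ = s (1 - s) (2 - 4 s)`, whose equilibria `0` and `1` cannot be reached, again by uniqueness.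
Finally `V = (s - 1/2)²` satisfies `V' = -8 (1/4 - V) V`, so `V` decreases and then decays
exponentially at rate `8 s₀ (1 - s₀)`.
-/

open Set Filter Topology

section Uniqueness

variable {E : Type*} [NormedAddCommGroup E] [NormedSpace ℝ E] {v : E → E} {f g : ℝ → E}
  {t₀ : ℝ}

theorem LocallyLipschitz.eq_of_hasDerivAt (hv : LocallyLipschitz v)
    (hf : ∀ t, HasDerivAt f (v (f t)) t) (hg : ∀ t, HasDerivAt g (v (g t)) t)
    (heq : f t₀ = g t₀) : f = g := by
  ext t
  obtain ⟨a, b, ht, ht₀⟩ : ∃ a b, t ∈ Ioo a b ∧ t₀ ∈ Ioo a b :=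
    ⟨min t t₀ - 1, max t t₀ + 1, by grind, by grind⟩
  have hf_cont : Continuous f := continuous_iff_continuousAt.2 fun t ↦ (hf t).continuousAt
  have hg_cont : Continuous g := continuous_iff_continuousAt.2 fun t ↦ (hg t).continuousAt
  set S := f '' Icc a b ∪ g '' Icc a b
  have hS : IsCompact S :=
    (isCompact_Icc.image hf_cont).union (isCompact_Icc.image hg_cont)
  obtain ⟨K, hK⟩ := (hv.locallyLipschitzOn (s := S)).exists_lipschitzOnWith_of_compact hS
  exact ODE_solution_unique_of_mem_Icc (v := fun _ ↦ v) (s := fun _ ↦ S) (fun _ _ ↦ hK) ht₀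
    hf_cont.continuousOn (fun t _ ↦ hf t) (fun t ht ↦ .inl ⟨t, Ioo_subset_Icc_self ht, rfl⟩)
    hg_cont.continuousOn (fun t _ ↦ hg t) (fun t ht ↦ .inr ⟨t, Ioo_subset_Icc_self ht, rfl⟩)
    heq (Ioo_subset_Icc_self ht)

theorem LocallyLipschitz.apply_ne_of_hasDerivAt {c : E} (hv : LocallyLipschitz v) (hc : v c = 0)
    (hf : ∀ t, HasDerivAt f (v (f t)) t) (h₀ : f t₀ ≠ c) (t : ℝ) : f t ≠ c := by
  intro h
  have hconst : ∀ t, HasDerivAt (fun _ ↦ c) (v c) t := fun t ↦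
    hc ▸ hasDerivAt_const (𝕜 := ℝ) t c
  exact h₀ (congrFun (hv.eq_of_hasDerivAt hf hconst h) t₀)

end Uniqueness

theorem le_mul_exp_of_hasDerivAt_le {V V' : ℝ → ℝ} {k : ℝ}
    (hV : ∀ t, HasDerivAt V (V' t) t) (hV' : ∀ t, 0 ≤ t → V' t ≤ k * V t)
    {t : ℝ} (ht : 0 ≤ t) :
    V t ≤ V 0 * Real.exp (k * t) := by
  have := le_gronwallBound_of_liminf_deriv_right_le (ε := 0) (b := t)
    (fun s _ ↦ (hV s).continuousAt.continuousWithinAt)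
    (fun s _ _ hr ↦ (hV s).hasDerivWithinAt.liminf_right_slope_le hr) le_rfl
    (fun s hs ↦ by simpa using hV' s hs.1) t ⟨ht, le_rfl⟩
  simpa [gronwallBound_ε0] using this

def segmentField (u : ℝ) : ℝ := u * (1 - u) * (2 - 4 * u)

theorem locallyLipschitz_segmentField : LocallyLipschitz segmentField :=
  ContDiff.locallyLipschitz (by unfold segmentField; fun_prop : ContDiff ℝ 1 segmentField)

section SegmentField

variable {f : ℝ → ℝ} (hf : ∀ t, HasDerivAt f (segmentField (f t)) t)
include hf

theorem mem_Ioo_of_hasDerivAt_segmentField {t₀ : ℝ} (h₀ : f t₀ ∈ Ioo 0 1) (t : ℝ) :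
    f t ∈ Ioo 0 1 := by
  have hcont : Continuous f := continuous_iff_continuousAt.2 fun t ↦ (hf t).continuousAt
  have avoid (c : ℝ) (hc : segmentField c = 0) (h : f t₀ ≠ c) (s : ℝ) : f s ≠ c :=
    locallyLipschitz_segmentField.apply_ne_of_hasDerivAt hc hf h s
  have h0 := avoid 0 (by simp [segmentField]) h₀.1.ne'
  have h1 := avoid 1 (by simp [segmentField]) h₀.2.ne
  constructor
  · by_contra! h
    obtain ⟨s, hs⟩ := intermediate_value_univ t t₀ hcont ⟨h, h₀.1.le⟩
    exact h0 s hs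
  · by_contra! h
    obtain ⟨s, hs⟩ := intermediate_value_univ t₀ t hcont ⟨h₀.2.le, h⟩
    exact h1 s hs

theorem tendsto_of_hasDerivAt_segmentField (h₀ : f 0 ∈ Ioo 0 1) :
    Tendsto f atTop (𝓝 (1 / 2)) := by
  set V : ℝ → ℝ := fun t ↦ (f t - 1 / 2) ^ 2
  have hV : ∀ t, HasDerivAt V (-8 * (1 / 4 - V t) * V t) t := fun t ↦ by
    refine (((hf t).sub_const (1 / 2)).fun_pow 2).congr_deriv ?_
    simp only [V, segmentField]; ring
  have hVnn : ∀ t, 0 ≤ V t := fun t ↦ sq_nonneg _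
  have hVlt : ∀ t, V t < 1 / 4 := fun t ↦ by
    have := mem_Ioo_of_hasDerivAt_segmentField hf h₀ t
    simp only [V]; nlinarith [this.1, this.2]
  have hVanti : Antitone V := antitone_of_deriv_nonpos (fun t ↦ (hV t).differentiableAt)
    fun t ↦ by rw [(hV t).deriv]; nlinarith [hVlt t, hVnn t]
  have hk : 0 < 8 * (1 / 4 - V 0) := by linarith [hVlt 0]
  have hdecay : ∀ t, 0 ≤ t → V t ≤ V 0 * Real.exp (-(8 * (1 / 4 - V 0)) * t) := fun t ht ↦
    le_mul_exp_of_hasDerivAt_le hV (fun s hs ↦ by nlinarith [hVanti hs, hVnn s]) ht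
  have hVlim : Tendsto V atTop (𝓝 0) := by
    refine squeeze_zero' (.of_forall hVnn) ((eventually_ge_atTop 0).mono hdecay) ?_
    simpa using (Real.tendsto_exp_atBot.comp
      (tendsto_id.const_mul_atTop_of_neg (neg_lt_zero.2 hk))).const_mul (V 0)
  rw [tendsto_iff_norm_sub_tendsto_zero]
  simpa [V, Real.sqrt_sq_eq_abs, Function.comp_def] using
    (Real.continuous_sqrt.tendsto 0).comp hVlim

end SegmentField

def pennies4Field (p : Fin 4 → ℝ) : Fin 4 → ℝ :=
  ![p 0 * (1 - p 0) * (2 - 4 * p 3), p 1 * (1 - p 1) * (4 * p 0 - 2),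
    p 2 * (1 - p 2) * (2 - 4 * p 1), p 3 * (1 - p 3) * (4 * p 2 - 2)]

def pennies4Symm (p : Fin 4 → ℝ) : Fin 4 → ℝ := ![p 3, 1 - p 0, p 1, 1 - p 2]

theorem locallyLipschitz_pennies4Field : LocallyLipschitz pennies4Field := by
  refine ContDiff.locallyLipschitz (𝕂 := ℝ) (contDiff_pi.2 fun i ↦ ?_)
  fin_cases i <;>
    simp only [pennies4Field, Matrix.cons_val, Matrix.cons_val_zero,
      Matrix.cons_val_one, Fin.isValue, Fin.zero_eta, Fin.mk_one, Fin.reduceFinMk] <;> fun_prop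

theorem pennies4Field_pennies4Symm (p : Fin 4 → ℝ) :
    pennies4Field (pennies4Symm p) =
      ![pennies4Field p 3, -pennies4Field p 0, pennies4Field p 1, -pennies4Field p 2] := by
  ext i
  fin_cases i <;>
    simp only [pennies4Field, pennies4Symm, Matrix.cons_val, Matrix.cons_val_zero,
      Matrix.cons_val_one, Fin.isValue, Fin.zero_eta, Fin.mk_one, Fin.reduceFinMk] <;> ring

theorem hasDerivAt_pennies4Symm_comp {x : ℝ → Fin 4 → ℝ}
    (hx : ∀ t, HasDerivAt x (pennies4Field (x t)) t) (t : ℝ) :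
    HasDerivAt (fun t ↦ pennies4Symm (x t)) (pennies4Field (pennies4Symm (x t))) t := by
  have hxi := hasDerivAt_pi.1 (hx t)
  rw [pennies4Field_pennies4Symm]
  refine hasDerivAt_pi.2 fun i ↦ ?_
  fin_cases i
  exacts [hxi 3, (hxi 0).const_sub 1, hxi 1, (hxi 2).const_sub 1]

theorem pennies4Symm_eq_self_iff {p : Fin 4 → ℝ} :
    pennies4Symm p = p ↔ p 0 = 1 - p 1 ∧ p 2 = p 1 ∧ p 3 = 1 - p 1 := by
  constructor
  · intro h
    have h0 := congrFun h 0
    have h1 := congrFun h 1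
    have h2 := congrFun h 2
    simp only [pennies4Symm, Matrix.cons_val] at h0 h1 h2
    exact ⟨by linarith, by linarith, by linarith⟩
  · rintro ⟨h0, h2, h3⟩
    ext i
    fin_cases i <;>
      simp only [pennies4Symm, Matrix.cons_val, Matrix.cons_val_zero, Matrix.cons_val_one,
        Fin.isValue, Fin.zero_eta, Fin.mk_one, Fin.reduceFinMk] <;> linarith

theorem pennies4Symm_eq_self_of_hasDerivAt {x : ℝ → Fin 4 → ℝ}
    (hx : ∀ t, HasDerivAt x (pennies4Field (x t)) t) {t₀ : ℝ}
    (h₀ : pennies4Symm (x t₀) = x t₀) (t : ℝ) : pennies4Symm (x t) = x t :=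
  congrFun (locallyLipschitz_pennies4Field.eq_of_hasDerivAt
    (hasDerivAt_pennies4Symm_comp hx) hx h₀) t

/-- The segment `{(1−t, t, t, 1−t) : t ∈ (0,1)}` is invariant under the
4-player matched–mismatched pennies replicator flow, and every solution starting on it
converges to the mixed equilibrium `(1/2, 1/2, 1/2, 1/2)` as `t → ∞`. -/
theorem pennies4_stable_manifold
    (x : ℝ → Fin 4 → ℝ)
    (h0 : ∀ t, HasDerivAt (fun s => x s 0) (x t 0 * (1 - x t 0) * (2 - 4 * x t 3)) t)
    (h1 : ∀ t, HasDerivAt (fun s => x s 1) (x t 1 * (1 - x t 1) * (4 * x t 0 - 2)) t)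
    (h2 : ∀ t, HasDerivAt (fun s => x s 2) (x t 2 * (1 - x t 2) * (2 - 4 * x t 1)) t)
    (h3 : ∀ t, HasDerivAt (fun s => x s 3) (x t 3 * (1 - x t 3) * (4 * x t 2 - 2)) t)
    (hinit : ∃ s ∈ Ioo (0:ℝ) 1,
      x 0 0 = 1 - s ∧ x 0 1 = s ∧ x 0 2 = s ∧ x 0 3 = 1 - s) :
    (∀ t, ∃ s ∈ Ioo (0:ℝ) 1,
      x t 0 = 1 - s ∧ x t 1 = s ∧ x t 2 = s ∧ x t 3 = 1 - s) ∧
    ∀ i, Tendsto (fun t => x t i) atTop (nhds (1/2)) := by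
  obtain ⟨s₀, hs₀, hx0, hx1, hx2, hx3⟩ := hinit
  have hx : ∀ t, HasDerivAt x (pennies4Field (x t)) t := fun t ↦ by
    refine hasDerivAt_pi.2 fun i ↦ ?_
    fin_cases i
    exacts [h0 t, h1 t, h2 t, h3 t]
  have hseg t : x t 0 = 1 - x t 1 ∧ x t 2 = x t 1 ∧ x t 3 = 1 - x t 1 :=
    pennies4Symm_eq_self_iff.1 <| pennies4Symm_eq_self_of_hasDerivAt hx
      (pennies4Symm_eq_self_iff.2 ⟨by rw [hx0, hx1], by rw [hx2, hx1], by rw [hx3, hx1]⟩) t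
  have hs t : HasDerivAt (fun t ↦ x t 1) (segmentField (x t 1)) t := by
    refine (h1 t).congr_deriv ?_
    rw [(hseg t).1, segmentField]
    ring
  have hs₀ : x 0 1 ∈ Ioo 0 1 := hx1 ▸ hs₀
  have hlim := tendsto_of_hasDerivAt_segmentField hs hs₀
  refine ⟨fun t ↦ ⟨x t 1, mem_Ioo_of_hasDerivAt_segmentField hs hs₀ t, (hseg t).1, rfl,
    (hseg t).2.1, (hseg t).2.2⟩, fun i ↦ ?_⟩
  have hlim' : Tendsto (fun t ↦ 1 - x t 1) atTop (𝓝 (1 / 2)) := by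
    convert (tendsto_const_nhds (x := (1 : ℝ))).sub hlim using 2
    norm_num
  fin_cases i
  exacts [hlim'.congr fun t ↦ (hseg t).1.symm, hlim, hlim.congr fun t ↦ (hseg t).2.1.symm,
    hlim'.congr fun t ↦ (hseg t).2.2.symm]
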